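/- arXiv:2304.14606 — 3 statements merged into one kernel-verified Lean document; each statement's English description precedes it below -/
import Mathlib

section
/- Let β ∈ ℝ^D with β ≠ 0 and let h_β be the linear classifier given by h_β(x) = +1 if β·x ≥ 0 and h_β(x) = −1 otherwise. Let 𝒜 ⊆ ℝ^D be a nonempty countable convex action set with 0 ∈ 𝒜 containing at least one a ≠ 0. Let 𝒟 be a probability measure on ℝ^D, define V(a) = 𝒟({x̂ : h_β(x̂ + a) = +1}) and, for a sample S = (x̂_1, …, x̂_N) of N i.i.d. draws from 𝒟, V̂(a | S) = (1/N) Σ_{n=1}^N 1{h_β(x̂_n + a) = +1}. Then for every δ > 0, with probability at least 1 − δ it holds simultaneously for every a ∈ 𝒜 that V̂(a | S) − V(a) ≤ √(2·ln(N + 1) / N) + √(ln(1/δ) / (2N)). -/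
open MeasureTheory

noncomputable section

/-- The linear classifier `h_β` on `ℝ^D`. -/
def hbeta {D : ℕ} (β : Fin D → ℝ) (x : Fin D → ℝ) : ℤ :=
  if 0 ≤ ∑ d, β d * x d then 1 else -1

/-- The expected validity `V(a) = 𝒟({x̂ : h(x̂ + a) = +1})`. -/
def expValidity {D : ℕ} (h : (Fin D → ℝ) → ℤ) (𝒟 : Measure (Fin D → ℝ))
    (a : Fin D → ℝ) : ℝ :=
  (𝒟 {z | h (z + a) = 1}).toReal

/-- The empirical validity `V̂(a | S) = (1/N) Σₙ 1{h(x̂ₙ + a) = +1}`. -/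
def empValidity {D : ℕ} (h : (Fin D → ℝ) → ℤ) {N : ℕ} (S : Fin N → Fin D → ℝ)
    (a : Fin D → ℝ) : ℝ :=
  (1 / N : ℝ) * ∑ n, (if h (S n + a) = 1 then (1 : ℝ) else 0)

/-!
`h_β(x̂ + a) = +1` iff `-β·x̂ ≤ β·a`, so `V(a)` and `V̂(a | S)` are the distribution function `F` of
the real random variable `Y = -β·x̂` and the empirical distribution function `F_N` of the sample
`Y₁, …, Y_N`, both evaluated at `c = β·a`; it suffices to bound `F_N - F` uniformly in `c ∈ ℝ`.
This is a one-sided Dvoretzky–Kiefer–Wolfowitz argument: at the `N - 1` quantiles `q_k` of `F` at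
levels `k/N`, Hoeffding's inequality and a union bound give `F_N(q_k⁻) ≤ F(q_k⁻) + η` for all `k`
outside an event of probability at most `(N - 1) e^{-2Nη²}`; between consecutive quantiles `F`
rises by at most `1/N`, so `F_N ≤ F + η + 1/N` everywhere. With `η = ε - 1/N`, where `ε` is the
stated deviation, the term `√(2 ln(N+1)/N)` pays both for the union bound and for the `1/N`.
-/

open ProbabilityTheory Real Set

def empiricalFreq {α : Type*} {N : ℕ} (S : Fin N → α) (B : Set α) : ℝ :=
  (1 / N : ℝ) * ∑ n, B.indicator 1 (S n)

section EmpiricalFreq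
variable {α : Type*} {N : ℕ}

lemma empiricalFreq_le_one (S : Fin N → α) (B : Set α) : empiricalFreq S B ≤ 1 := by
  have h_sum : ∑ n, B.indicator (1 : α → ℝ) (S n) ≤ N := by
    simpa using Finset.sum_le_card_nsmul Finset.univ (fun n ↦ B.indicator (1 : α → ℝ) (S n)) 1
      fun n _ ↦ indicator_le_self' (fun _ _ ↦ zero_le_one) _
  rcases N.eq_zero_or_pos with rfl | hN
  · simp [empiricalFreq]
  · rw [empiricalFreq, one_div_mul_eq_div, div_le_one (by positivity)]
    exact h_sum

lemma empiricalFreq_mono (S : Fin N → α) {B C : Set α} (h : B ⊆ C) :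
    empiricalFreq S B ≤ empiricalFreq S C :=
  mul_le_mul_of_nonneg_left (Finset.sum_le_sum fun n _ ↦
    indicator_le_indicator_of_subset h (fun _ ↦ zero_le_one) _) (by positivity)

lemma empiricalFreq_comp {β : Type*} (f : α → β) (S : Fin N → α) (B : Set β) :
    empiricalFreq (f ∘ S) B = empiricalFreq S (f ⁻¹' B) := rfl

variable [MeasurableSpace α] (μ : Measure α) [IsProbabilityMeasure μ]

lemma hasSubgaussianMGF_indicator_sub {B : Set α} (hB : MeasurableSet B) :
    HasSubgaussianMGF (fun x ↦ B.indicator 1 x - μ.real B) (1 / 4) μ := by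
  have h := hasSubgaussianMGF_of_mem_Icc (μ := μ) (X := B.indicator (1 : α → ℝ)) (a := 0) (b := 1)
    (measurable_one.indicator hB).aemeasurable
    (ae_of_all _ fun x ↦ ⟨indicator_nonneg (fun _ _ ↦ zero_le_one) x,
      indicator_le_self' (fun _ _ ↦ zero_le_one) x⟩)
  rw [integral_indicator_one hB] at h
  convert h using 1
  norm_num

lemma measureReal_add_le_empiricalFreq_le {B : Set α} (hB : MeasurableSet B) (N : ℕ) {η : ℝ}
    (hη : 0 ≤ η) :
    (Measure.pi fun _ : Fin N ↦ μ).real {S | μ.real B + η ≤ empiricalFreq S B} ≤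
      exp (-(2 * N * η ^ 2)) := by
  rcases N.eq_zero_or_pos with rfl | hN
  · simp
  have h_indep : iIndepFun (fun n (S : Fin N → α) ↦ B.indicator 1 (S n) - μ.real B)
      (Measure.pi fun _ ↦ μ) :=
    iIndepFun_pi fun _ ↦ ((measurable_one.indicator hB).sub_const _).aemeasurable
  have h_subG : ∀ n ∈ (Finset.univ : Finset (Fin N)),
      HasSubgaussianMGF (fun S : Fin N → α ↦ B.indicator 1 (S n) - μ.real B) (1 / 4)
        (Measure.pi fun _ ↦ μ) := fun n _ ↦
    HasSubgaussianMGF.of_map (measurable_pi_apply n).aemeasurable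
      (by rw [(measurePreserving_eval (fun _ ↦ μ) n).map_eq]
          exact hasSubgaussianMGF_indicator_sub μ hB)
  have hoeffding := HasSubgaussianMGF.measure_sum_ge_le_of_iIndepFun h_indep h_subG
    (mul_nonneg N.cast_nonneg hη)
  refine le_trans (measureReal_mono fun S hS ↦ ?_) (hoeffding.trans_eq ?_)
  · simp only [mem_ofPred_eq, empiricalFreq, Finset.sum_sub_distrib, Finset.sum_const,
      Finset.card_univ, Fintype.card_fin, nsmul_eq_mul] at hS ⊢
    rw [one_div_mul_eq_div, le_div_iff₀ (by positivity)] at hS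
    linarith
  · simp only [Finset.sum_const, Finset.card_univ, Fintype.card_fin, nsmul_eq_mul]
    congr 1
    push_cast
    field_simp
    ring

end EmpiricalFreq

/-- Only meaningful for `0 < p < 1`: otherwise the set is empty or unbounded below and `sInf`
returns `0`. -/
def quantile (ν : Measure ℝ) (p : ℝ) : ℝ := sInf {t | p ≤ cdf ν t}

section Quantile
variable {ν : Measure ℝ} {p : ℝ}

lemma bddBelow_le_cdf (hp : 0 < p) : BddBelow {t | p ≤ cdf ν t} := by
  obtain ⟨t₀, ht₀⟩ :=
    ((tendsto_cdf_atBot (μ := ν)).eventually (gt_mem_nhds hp)).exists_forall_of_atBot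
  exact ⟨t₀, fun t ht ↦ le_of_not_gt fun htt ↦ (ht₀ t htt.le).not_ge ht⟩

lemma nonempty_le_cdf (hp : p < 1) : {t | p ≤ cdf ν t}.Nonempty :=
  ((tendsto_cdf_atTop (μ := ν)).eventually (le_mem_nhds hp)).exists

lemma cdf_lt_of_lt_quantile (hp : 0 < p) {t : ℝ} (ht : t < quantile ν p) : cdf ν t < p :=
  lt_of_not_ge fun h ↦ ht.not_ge (csInf_le (bddBelow_le_cdf hp) h)

lemma le_cdf_quantile (hp₀ : 0 < p) (hp₁ : p < 1) : p ≤ cdf ν (quantile ν p) := by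
  refine ge_of_tendsto (((cdf ν).right_continuous _).mono Ioi_subset_Ici_self)
    (eventually_nhdsWithin_of_forall fun t ht ↦ ?_)
  obtain ⟨s, hs, hst⟩ := (csInf_lt_iff (bddBelow_le_cdf hp₀) (nonempty_le_cdf hp₁)).1 ht
  exact hs.trans (monotone_cdf ν hst.le)

lemma lt_quantile_of_cdf_lt (hp₀ : 0 < p) (hp₁ : p < 1) {t : ℝ} (ht : cdf ν t < p) :
    t < quantile ν p :=
  lt_of_not_ge fun h ↦ ht.not_ge ((le_cdf_quantile hp₀ hp₁).trans (monotone_cdf ν h))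

lemma measureReal_Iio_quantile_le [IsProbabilityMeasure ν] (hp : 0 < p) :
    ν.real (Iio (quantile ν p)) ≤ p := by
  set q := quantile ν p
  have h_union : ⋃ n : ℕ, Iic (q - 1 / (n + 1)) = Iio q :=
    iUnion_Iic_eq_Iio_of_lt_of_tendsto (fun n ↦ sub_lt_self q Nat.one_div_pos_of_nat)
      (by simpa using tendsto_const_nhds.sub (tendsto_one_div_add_atTop_nhds_zero_nat (𝕜 := ℝ)))
  have h_mono : Monotone fun n : ℕ ↦ Iic (q - 1 / (n + 1)) := fun i j hij ↦
    Iic_subset_Iic.2 (by gcongr)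
  refine ENNReal.toReal_le_of_le_ofReal hp.le ?_
  rw [← h_union, h_mono.measure_iUnion]
  refine iSup_le fun n ↦ ?_
  rw [← ofReal_cdf]
  exact ENNReal.ofReal_le_ofReal
    (cdf_lt_of_lt_quantile hp (sub_lt_self q Nat.one_div_pos_of_nat)).le

end Quantile

lemma empiricalFreq_Iic_le_of_forall_quantile {N : ℕ} {ν : Measure ℝ} [IsProbabilityMeasure ν]
    (hN : 0 < N) {y : Fin N → ℝ} {η : ℝ} (hη : 0 ≤ η)
    (h : ∀ k ∈ Finset.Icc 1 (N - 1),
      empiricalFreq y (Iio (quantile ν (k / N))) ≤ ν.real (Iio (quantile ν (k / N))) + η)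
    (c : ℝ) :
    empiricalFreq y (Iic c) ≤ cdf ν c + η + 1 / N := by
  have hN' : (0 : ℝ) < N := Nat.cast_pos.2 hN
  set k := ⌊N * cdf ν c⌋₊
  have hk : (k : ℝ) ≤ N * cdf ν c := Nat.floor_le (mul_nonneg hN'.le (cdf_nonneg ν c))
  have hk' : N * cdf ν c < k + 1 := Nat.lt_floor_add_one _
  -- If `k + 1 < N`, the quantile at level `(k + 1)/N` lies strictly to the right of `c`.
  by_cases hkN : N ≤ k + 1
  · have : (N : ℝ) ≤ k + 1 := by exact_mod_cast hkN
    calc empiricalFreq y (Iic c) ≤ 1 := empiricalFreq_le_one y _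
      _ ≤ cdf ν c + 1 / N := by
        rw [← sub_le_iff_le_add', le_div_iff₀ hN']
        linarith
      _ ≤ cdf ν c + η + 1 / N := by linarith
  · have hk_mem : k + 1 ∈ Finset.Icc 1 (N - 1) := Finset.mem_Icc.2 ⟨by omega, by omega⟩
    rw [not_le] at hkN
    have hp₀ : (0 : ℝ) < ((k + 1 : ℕ) : ℝ) / N := by positivity
    have hp₁ : ((k + 1 : ℕ) : ℝ) / N < 1 := by
      rw [div_lt_one hN']
      exact_mod_cast hkN
    have hc : c < quantile ν ((k + 1 : ℕ) / N) := by
      refine lt_quantile_of_cdf_lt hp₀ hp₁ ?_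
      rw [lt_div_iff₀ hN']
      push_cast
      linarith
    calc empiricalFreq y (Iic c)
        ≤ empiricalFreq y (Iio (quantile ν ((k + 1 : ℕ) / N))) :=
          empiricalFreq_mono y (Iic_subset_Iio.2 hc)
      _ ≤ ((k + 1 : ℕ) : ℝ) / N + η := (h _ hk_mem).trans (by
          gcongr
          exact measureReal_Iio_quantile_le hp₀)
      _ ≤ cdf ν c + η + 1 / N := by
        have : (k : ℝ) / N ≤ cdf ν c := by rw [div_le_iff₀ hN']; linarith
        rw [Nat.cast_succ, add_div]
        linarith

theorem one_sub_le_measureReal_empiricalFreq_Iic_le {α : Type*} [MeasurableSpace α]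
    (μ : Measure α) [IsProbabilityMeasure μ] {f : α → ℝ} (hf : Measurable f) {N : ℕ} (hN : 0 < N)
    {η : ℝ} (hη : 0 ≤ η) :
    1 - (N - 1) * exp (-(2 * N * η ^ 2)) ≤
      (Measure.pi fun _ : Fin N ↦ μ).real
        {S | ∀ c, empiricalFreq (f ∘ S) (Iic c) ≤ cdf (μ.map f) c + η + 1 / N} := by
  have := Measure.isProbabilityMeasure_map (μ := μ) hf.aemeasurable
  set P := Measure.pi fun _ : Fin N ↦ μ
  set B : ℕ → Set α := fun k ↦ f ⁻¹' Iio (quantile (μ.map f) (k / N))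
  set bad := ⋃ k ∈ Finset.Icc 1 (N - 1),
    {S : Fin N → α | μ.real (B k) + η ≤ empiricalFreq S (B k)}
  have h_bad : P.real bad ≤ (N - 1) * exp (-(2 * N * η ^ 2)) := by
    refine (measureReal_biUnion_finset_le _ _).trans ?_
    refine (Finset.sum_le_card_nsmul _ _ _ fun k _ ↦
      measureReal_add_le_empiricalFreq_le μ (hf measurableSet_Iio) N hη).trans_eq ?_
    rw [Nat.card_Icc, nsmul_eq_mul, Nat.add_sub_cancel, Nat.cast_sub hN, Nat.cast_one]
  have h_good :
      badᶜ ⊆ {S | ∀ c, empiricalFreq (f ∘ S) (Iic c) ≤ cdf (μ.map f) c + η + 1 / N} := by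
    intro S hS c
    simp only [bad, compl_iUnion, mem_iInter, mem_compl_iff, mem_ofPred_eq, not_le] at hS
    refine empiricalFreq_Iic_le_of_forall_quantile hN hη (fun k hk ↦ ?_) c
    rw [empiricalFreq_comp, map_measureReal_apply hf measurableSet_Iio]
    exact (hS k hk).le
  have h_union := measureReal_union_le (μ := P) badᶜ bad
  rw [compl_union_self, probReal_univ] at h_union
  linarith [measureReal_mono h_good (μ := P)]

lemma sub_one_mul_exp_neg_le {N : ℕ} (hN : 0 < N) {δ η : ℝ} (hδ : 0 < δ)
    (hη : √(log (N + 1) / (2 * N)) + √(log (1 / δ) / (2 * N)) ≤ η) :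
    (N - 1) * exp (-(2 * N * η ^ 2)) ≤ δ := by
  have hN' : (0 : ℝ) < N := Nat.cast_pos.2 hN
  set L := log (N + 1)
  set M := log (1 / δ)
  have hL : 0 ≤ L := log_nonneg (by linarith)
  have h_sq : L + M ≤ 2 * N * η ^ 2 := by
    have hs := sqrt_nonneg (L / (2 * N))
    have hm := sqrt_nonneg (M / (2 * N))
    have h_sum_sq : L / (2 * N) + M / (2 * N) ≤ η ^ 2 := by
      calc L / (2 * N) + M / (2 * N) ≤ √(L / (2 * N)) ^ 2 + √(M / (2 * N)) ^ 2 := by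
            rw [sq_sqrt (by positivity), sq_sqrt']
            linarith [le_max_left (M / (2 * N)) 0]
        _ ≤ (√(L / (2 * N)) + √(M / (2 * N))) ^ 2 := by nlinarith
        _ ≤ η ^ 2 := pow_le_pow_left₀ (by positivity) hη 2
    rw [← add_div, div_le_iff₀ (by positivity)] at h_sum_sq
    linarith
  have h_exp : exp (-(2 * N * η ^ 2)) ≤ δ / (N + 1) := by
    calc exp (-(2 * N * η ^ 2)) ≤ exp (-L) * exp (-M) := by
          rw [← exp_add]
          exact exp_le_exp.2 (by linarith)
      _ = δ / (N + 1) := by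
          rw [exp_neg, exp_neg, exp_log (by positivity), exp_log (by positivity), one_div,
            inv_inv, div_eq_inv_mul]
  calc (N - 1) * exp (-(2 * N * η ^ 2)) ≤ (N + 1) * (δ / (N + 1)) := by
        gcongr
        linarith
    _ = δ := by field_simp

lemma one_div_add_sqrt_le_sqrt_two_mul_log {N : ℕ} (hN : 2 ≤ N) :
    1 / N + √(log (N + 1) / (2 * N)) ≤ √(2 * log (N + 1) / N) := by
  have hN' : (2 : ℝ) ≤ N := by exact_mod_cast hN
  have hL : 1 ≤ log (N + 1) := by
    rw [le_log_iff_exp_le (by positivity)]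
    linarith [exp_one_lt_d9]
  have h_double : √(2 * log (N + 1) / N) = 2 * √(log (N + 1) / (2 * N)) := by
    rw [show 2 * log (N + 1) / N = 2 ^ 2 * (log (N + 1) / (2 * N)) by field_simp,
      sqrt_mul (by positivity), sqrt_sq zero_le_two]
  have h_inv : 1 / (N : ℝ) ≤ √(log (N + 1) / (2 * N)) := by
    rw [le_sqrt (by positivity) (by positivity), div_pow, one_pow,
      div_le_div_iff₀ (by positivity) (by positivity)]
    nlinarith
  linarith

lemma sub_one_div_nonneg_and_sub_one_mul_exp_le {N : ℕ} (hN : 0 < N) {δ : ℝ} (hδ : 0 < δ) :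
    0 ≤ √(2 * log (N + 1) / N) + √(log (1 / δ) / (2 * N)) - 1 / N ∧
      (N - 1) * exp (-(2 * N * (√(2 * log (N + 1) / N) + √(log (1 / δ) / (2 * N)) - 1 / N) ^ 2))
        ≤ δ := by
  obtain rfl | hN₂ := (Nat.succ_le_of_lt hN).eq_or_lt
  -- For `N = 1` the union bound is over no events at all, and `√(2 ln 2) ≥ 1`.
  · refine ⟨?_, by simpa using hδ.le⟩
    have : 1 ≤ √(2 * log (1 + 1) / 1) := by
      rw [one_le_sqrt]
      norm_num
      linarith [log_two_gt_d9]
    linarith [sqrt_nonneg (log (1 / δ) / (2 * 1))]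
  · have h := one_div_add_sqrt_le_sqrt_two_mul_log hN₂
    have hη : √(log (N + 1) / (2 * N)) + √(log (1 / δ) / (2 * N)) ≤
        √(2 * log (N + 1) / N) + √(log (1 / δ) / (2 * N)) - 1 / N := by linarith
    exact ⟨(add_nonneg (sqrt_nonneg _) (sqrt_nonneg _)).trans hη, sub_one_mul_exp_neg_le hN hδ hη⟩

section LinearClassifier
variable {D : ℕ} (β : Fin D → ℝ)

lemma hbeta_add_eq_one_iff (x a : Fin D → ℝ) : hbeta β (x + a) = 1 ↔ -(β ⬝ᵥ x) ≤ β ⬝ᵥ a := by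
  rw [neg_le_iff_add_nonneg', ← dotProduct_add]
  unfold hbeta dotProduct
  split_ifs with h <;> simpa using h

lemma measurable_neg_dotProduct : Measurable fun x : Fin D → ℝ ↦ -(β ⬝ᵥ x) := by
  fun_prop

lemma empValidity_hbeta {N : ℕ} (S : Fin N → Fin D → ℝ) (a : Fin D → ℝ) :
    empValidity (hbeta β) S a = empiricalFreq ((fun x ↦ -(β ⬝ᵥ x)) ∘ S) (Iic (β ⬝ᵥ a)) := by
  simp only [empValidity, empiricalFreq, hbeta_add_eq_one_iff, indicator_apply, mem_Iic,
    Function.comp_apply, Pi.one_apply]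

lemma expValidity_hbeta (𝒟 : Measure (Fin D → ℝ)) [IsProbabilityMeasure 𝒟] (a : Fin D → ℝ) :
    expValidity (hbeta β) 𝒟 a = cdf (𝒟.map fun x ↦ -(β ⬝ᵥ x)) (β ⬝ᵥ a) := by
  have := Measure.isProbabilityMeasure_map (μ := 𝒟) (measurable_neg_dotProduct β).aemeasurable
  rw [cdf_eq_real, map_measureReal_apply (measurable_neg_dotProduct β) measurableSet_Iic]
  simp only [expValidity, hbeta_add_eq_one_iff]
  rfl

end LinearClassifier

theorem stmt12_general {D : ℕ} (β : Fin D → ℝ)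
    (A : Set (Fin D → ℝ))
    (𝒟 : Measure (Fin D → ℝ)) [IsProbabilityMeasure 𝒟]
    (N : ℕ) (hN : 0 < N) (δ : ℝ) (hδ : 0 < δ) :
    ENNReal.ofReal (1 - δ) ≤
      Measure.pi (fun _ : Fin N => 𝒟)
        {S : Fin N → Fin D → ℝ | ∀ a ∈ A,
          empValidity (hbeta β) S a - expValidity (hbeta β) 𝒟 a ≤
            Real.sqrt (2 * Real.log (N + 1) / N) +
              Real.sqrt (Real.log (1 / δ) / (2 * N))} := by
  set η := √(2 * log (N + 1) / N) + √(log (1 / δ) / (2 * N)) - 1 / N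
  obtain ⟨hη, h_budget⟩ := sub_one_div_nonneg_and_sub_one_mul_exp_le hN hδ
  have h_dkw := one_sub_le_measureReal_empiricalFreq_Iic_le 𝒟 (measurable_neg_dotProduct β) hN hη
  refine ENNReal.ofReal_le_of_le_toReal ((sub_le_sub_left h_budget 1).trans
    (h_dkw.trans (measureReal_mono fun S hS a _ ↦ ?_)))
  rw [empValidity_hbeta, expValidity_hbeta]
  linarith [hS (β ⬝ᵥ a)]

/-- Uniform bound for a linear classifier and a convex action set: with probability at
least `1 − δ` over `N` i.i.d. draws `S` from `𝒟`, simultaneously for all `a ∈ 𝒜`,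
`V̂(a | S) − V(a) ≤ √(2 ln(N+1)/N) + √(ln(1/δ)/(2N))`. -/
theorem stmt12 {D : ℕ} (β : Fin D → ℝ) (hβne : β ≠ 0)
    (A : Set (Fin D → ℝ)) (hA : A.Countable) (hAconv : Convex ℝ A)
    (h0A : (0 : Fin D → ℝ) ∈ A) (hAnz : ∃ a ∈ A, a ≠ 0)
    (𝒟 : Measure (Fin D → ℝ)) [IsProbabilityMeasure 𝒟]
    (N : ℕ) (hN : 0 < N) (δ : ℝ) (hδ : 0 < δ) :
    ENNReal.ofReal (1 - δ) ≤
      Measure.pi (fun _ : Fin N => 𝒟)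
        {S : Fin N → Fin D → ℝ | ∀ a ∈ A,
          empValidity (hbeta β) S a - expValidity (hbeta β) 𝒟 a ≤
            Real.sqrt (2 * Real.log (N + 1) / N) +
              Real.sqrt (Real.log (1 / δ) / (2 * N))} :=
  stmt12_general β A 𝒟 N hN δ hδ
end
end

section
/- Let β ∈ ℝ^D and let h_β be the linear classifier given by h_β(x) = +1 if β·x ≥ 0 and h_β(x) = −1 otherwise. Then for every action set 𝒜 ⊆ ℝ^D, every N ≥ 1, and every choice of points x_1, …, x_N ∈ ℝ^D, the cardinality of the pattern set {(h_β(x_1 + a), …, h_β(x_N + a)) : a ∈ 𝒜} is at most N + 1. In particular, the growth function of the family ℋ = {x ↦ h_β(x + a) : a ∈ 𝒜} satisfies Π_ℋ(N) ≤ N + 1. -/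
noncomputable section

/-- The pattern set realized by the family `{x ↦ h(x + a) : a ∈ A}` on the points `xs`. -/
def patterns {D : ℕ} (h : (Fin D → ℝ) → ℤ) (A : Set (Fin D → ℝ)) {N : ℕ}
    (xs : Fin N → Fin D → ℝ) : Set (Fin N → ℤ) :=
  {p | ∃ a ∈ A, ∀ n, p n = h (xs n + a)}

/-- The growth function of the family `{x ↦ h(x + a) : a ∈ A}`. -/
def growth {D : ℕ} (h : (Fin D → ℝ) → ℤ) (A : Set (Fin D → ℝ)) (N : ℕ) : ℕ∞ :=
  ⨆ xs : Fin N → Fin D → ℝ, (patterns h A xs).encard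

/-- For a linear classifier, every pattern set on `N` points has at most `N + 1` elements;
in particular the growth function satisfies `Π_ℋ(N) ≤ N + 1`. -/
theorem stmt15 {D : ℕ} (β : Fin D → ℝ) (A : Set (Fin D → ℝ))
    (N : ℕ) (hN : 1 ≤ N) :
    (∀ xs : Fin N → Fin D → ℝ,
        (patterns (hbeta β) A xs).encard ≤ ((N : ℕ∞) + 1)) ∧
      growth (hbeta β) A N ≤ ((N : ℕ∞) + 1) := by
  have hone_iff : ∀ x : Fin D → ℝ, hbeta β x = 1 ↔ 0 ≤ ∑ d, β d * x d := by
    intro x; unfold hbeta; split <;> simp_all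
  have main : ∀ xs : Fin N → Fin D → ℝ,
      (patterns (hbeta β) A xs).encard ≤ ((N : ℕ∞) + 1) := by
    intro xs
    set c : Fin N → ℝ := fun n => ∑ d, β d * xs n d with hc
    have hval : ∀ (a : Fin D → ℝ) (n : Fin N),
        hbeta β (xs n + a) = 1 ↔ 0 ≤ c n + ∑ d, β d * a d := by
      intro a n
      rw [hone_iff]
      have : ∑ d, β d * (xs n + a) d = c n + ∑ d, β d * a d := by
        simp [hc, mul_add, Finset.sum_add_distrib]
      rw [this]
    set f : (Fin N → ℤ) → ℕ := fun p => (Finset.univ.filter (fun n => p n = 1)).card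
      with hf
    have half : ∀ p q : Fin N → ℤ, ∀ a b : Fin D → ℝ,
        (∀ n, p n = hbeta β (xs n + a)) → (∀ n, q n = hbeta β (xs n + b)) →
        (∑ d, β d * a d) ≤ (∑ d, β d * b d) →
        Finset.univ.filter (fun n => p n = 1) ⊆ Finset.univ.filter (fun n => q n = 1) := by
      intro p q a b hp hq hle n hn
      simp only [Finset.mem_filter, Finset.mem_univ, true_and] at hn ⊢
      rw [hq n, hval]
      rw [hp n, hval] at hn
      linarith
    have hinj : Set.InjOn f (patterns (hbeta β) A xs) := by
      rintro p ⟨a, ha, hp⟩ q ⟨b, hb, hq⟩ hcard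
      have hone : ∀ (r : Fin N → ℤ) (e : Fin D → ℝ), (∀ n, r n = hbeta β (xs n + e)) →
          ∀ n, r n = 1 ∨ r n = -1 := by
        intro r e hr n; rw [hr n]; unfold hbeta; split <;> simp
      have hsets : Finset.univ.filter (fun n => p n = 1)
          = Finset.univ.filter (fun n => q n = 1) := by
        rcases le_total (∑ d, β d * a d) (∑ d, β d * b d) with h | h
        · exact Finset.eq_of_subset_of_card_le (half p q a b hp hq h) (le_of_eq hcard.symm)
        · exact (Finset.eq_of_subset_of_card_le (half q p b a hq hp h) (le_of_eq hcard)).symm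
      funext n
      have := Finset.ext_iff.mp hsets n
      simp only [Finset.mem_filter, Finset.mem_univ, true_and] at this
      rcases hone p a hp n with h1 | h1 <;> rcases hone q b hq n with h2 | h2
      · rw [h1, h2]
      · have h3 := this.mp h1; omega
      · have h3 := this.mpr h2; omega
      · rw [h1, h2]
    have himg : f '' patterns (hbeta β) A xs ⊆ ↑(Finset.range (N + 1)) := by
      rintro _ ⟨p, hp, rfl⟩
      simp only [Finset.coe_range, Set.mem_Iio]
      have : f p ≤ N := by
        have := Finset.card_filter_le Finset.univ (fun n => p n = 1)
        simpa [hf] using this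
      omega
    calc (patterns (hbeta β) A xs).encard = (f '' patterns (hbeta β) A xs).encard :=
            hinj.encard_image.symm
      _ ≤ (↑(Finset.range (N + 1)) : Set ℕ).encard := Set.encard_mono himg
      _ = ((N + 1 : ℕ) : ℕ∞) := by
            rw [Set.encard_coe_eq_coe_finsetCard, Finset.card_range]
      _ = (N : ℕ∞) + 1 := by push_cast; rfl
  exact ⟨main, iSup_le main⟩

end
end

section
/- Let β ∈ ℝ^D with β ≠ 0 and let h_β be the linear classifier given by h_β(x) = +1 if β·x ≥ 0 and h_β(x) = −1 otherwise. Let 𝒜 ⊆ ℝ^D be a convex action set with 0 ∈ 𝒜 that contains at least one action a with β·a ≠ 0. Then for every N ≥ 1 the growth function of the family ℋ = {x ↦ h_β(x + a) : a ∈ 𝒜} satisfies Π_ℋ(N) = N + 1; that is, there exist points x_1, …, x_N ∈ ℝ^D whose pattern set {(h_β(x_1 + a), …, h_β(x_N + a)) : a ∈ 𝒜} has exactly N + 1 elements, and no choice of N points yields more than N + 1 patterns. -/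
noncomputable section

lemma hbeta_eq_one_iff {D : ℕ} (β : Fin D → ℝ) (x : Fin D → ℝ) :
    hbeta β x = 1 ↔ 0 ≤ ∑ d, β d * x d := by
  unfold hbeta; split <;> simp_all

lemma hbeta_vals {D : ℕ} (β : Fin D → ℝ) (x : Fin D → ℝ) :
    hbeta β x = 1 ∨ hbeta β x = -1 := by
  unfold hbeta; split <;> simp

lemma dot_add {D : ℕ} (β : Fin D → ℝ) (x y : Fin D → ℝ) :
    ∑ d, β d * (x + y) d = (∑ d, β d * x d) + ∑ d, β d * y d := by
  simp [mul_add, Finset.sum_add_distrib]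

/-- Upper bound: at most `N+1` patterns. -/
lemma patterns_encard_le {D N : ℕ} (β : Fin D → ℝ) (A : Set (Fin D → ℝ))
    (xs : Fin N → Fin D → ℝ) :
    (patterns (hbeta β) A xs).encard ≤ (N : ℕ∞) + 1 := by
  classical
  set F : (Fin N → ℤ) → ℕ := fun p => (Finset.univ.filter (fun n => p n = 1)).card with hF
  -- monotonicity of patterns in the dot product of the action
  have key : ∀ (a1 a2 : Fin D → ℝ) (p q : Fin N → ℤ),
      (∀ n, p n = hbeta β (xs n + a1)) → (∀ n, q n = hbeta β (xs n + a2)) →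
      (∑ d, β d * a1 d) ≤ (∑ d, β d * a2 d) → ∀ n, p n = 1 → q n = 1 := by
    intro a1 a2 p q hp hq hle n hpn
    rw [hp n, hbeta_eq_one_iff, dot_add] at hpn
    rw [hq n, hbeta_eq_one_iff, dot_add]
    linarith
  have hsubeq : ∀ (a1 a2 : Fin D → ℝ) (p q : Fin N → ℤ),
      (∀ n, p n = hbeta β (xs n + a1)) → (∀ n, q n = hbeta β (xs n + a2)) →
      F p = F q → (∑ d, β d * a1 d) ≤ (∑ d, β d * a2 d) → p = q := by
    intro a1 a2 p q hp hq hFpq hle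
    have hsub : (Finset.univ.filter (fun n => p n = 1)) ⊆
        (Finset.univ.filter (fun n => q n = 1)) := by
      intro n hn
      simp only [Finset.mem_filter, Finset.mem_univ, true_and] at hn ⊢
      exact key a1 a2 p q hp hq hle n hn
    have heq := Finset.eq_of_subset_of_card_le hsub (le_of_eq hFpq.symm)
    funext n
    have hmem : p n = 1 ↔ q n = 1 := by
      constructor
      · intro h
        have : n ∈ Finset.univ.filter (fun n => p n = 1) := by simp [h]
        rw [heq] at this; simpa using this
      · intro h
        have : n ∈ Finset.univ.filter (fun n => q n = 1) := by simp [h]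
        rw [← heq] at this; simpa using this
    rcases hbeta_vals β (xs n + a1) with h1 | h1 <;>
      rcases hbeta_vals β (xs n + a2) with h2 | h2 <;>
      rw [hp n, hq n, h1, h2] at hmem ⊢ <;> simp_all
  have hinj : Set.InjOn F (patterns (hbeta β) A xs) := by
    rintro p ⟨a1, -, hp⟩ q ⟨a2, -, hq⟩ hFpq
    rcases le_total (∑ d, β d * a1 d) (∑ d, β d * a2 d) with hle | hle
    · exact hsubeq a1 a2 p q hp hq hFpq hle
    · exact (hsubeq a2 a1 q p hq hp hFpq.symm hle).symm
  have himg : F '' (patterns (hbeta β) A xs) ⊆ ↑(Finset.Iic N) := by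
    rintro m ⟨p, -, rfl⟩
    simp only [Finset.coe_Iic, Set.mem_Iic, hF]
    exact le_trans (Finset.card_filter_le _ _) (by simp)
  calc (patterns (hbeta β) A xs).encard
      = (F '' (patterns (hbeta β) A xs)).encard := (hinj.encard_image).symm
    _ ≤ (↑(Finset.Iic N) : Set ℕ).encard := Set.encard_le_encard himg
    _ = ((N + 1 : ℕ) : ℕ∞) := by
        rw [Set.encard_coe_eq_coe_finsetCard, Nat.card_Iic]
    _ = (N : ℕ∞) + 1 := by push_cast; rfl

/-- For a nonzero linear classifier and a convex action set containing `0` and some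
action `a` with `β·a ≠ 0`, the growth function satisfies `Π_ℋ(N) = N + 1`: some `N`
points realize exactly `N + 1` patterns, and no `N` points realize more. -/
theorem stmt16 {D : ℕ} (β : Fin D → ℝ) (hβne : β ≠ 0)
    (A : Set (Fin D → ℝ)) (hAconv : Convex ℝ A) (h0A : (0 : Fin D → ℝ) ∈ A)
    (hAnz : ∃ a ∈ A, (∑ d, β d * a d) ≠ 0)
    (N : ℕ) (hN : 1 ≤ N) :
    (∃ xs : Fin N → Fin D → ℝ,
        (patterns (hbeta β) A xs).encard = ((N : ℕ∞) + 1)) ∧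
      (∀ xs : Fin N → Fin D → ℝ,
        (patterns (hbeta β) A xs).encard ≤ ((N : ℕ∞) + 1)) ∧
      growth (hbeta β) A N = ((N : ℕ∞) + 1) := by
  classical
  obtain ⟨d0, hd0⟩ := Function.ne_iff.mp hβne
  have hd0' : β d0 ≠ 0 := by simpa using hd0
  -- we can realize any dot product value
  have exists_dot : ∀ c : ℝ, ∃ x : Fin D → ℝ, ∑ d, β d * x d = c := by
    intro c
    refine ⟨Pi.single d0 (c / β d0), ?_⟩
    rw [Finset.sum_eq_single d0]
    · rw [Pi.single_eq_same, mul_div_cancel₀ _ hd0']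
    · intro b _ hb; rw [Pi.single_eq_of_ne hb, mul_zero]
    · simp
  obtain ⟨a, haA, hs0⟩ := hAnz
  set s0 : ℝ := ∑ d, β d * a d with hs0def
  have hN1 : (0 : ℝ) < (N : ℝ) + 1 := by positivity
  set u : ℝ := s0 / ((N : ℝ) + 1) with hu_def
  have hu : u ≠ 0 := div_ne_zero hs0 (ne_of_gt hN1)
  set e : ℕ → ℝ := fun n => if 0 < u then (n : ℝ) + 1 else (n : ℝ) with he
  choose xs hxs using fun n : Fin N => exists_dot (-(e n * u))
  -- the actions
  set ak : Fin (N + 1) → Fin D → ℝ := fun k => (((k : ℕ) : ℝ) / ((N : ℝ) + 1)) • a with hak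
  have hakA : ∀ k, ak k ∈ A := by
    intro k
    set t : ℝ := ((k : ℕ) : ℝ) / ((N : ℝ) + 1) with ht
    have ht0 : 0 ≤ t := by positivity
    have ht1 : t ≤ 1 := by
      rw [ht, div_le_one hN1]
      have : ((k : ℕ) : ℝ) ≤ (N : ℝ) := by
        exact_mod_cast Nat.lt_succ_iff.mp k.isLt
      linarith
    have := hAconv h0A haA (by linarith : (0:ℝ) ≤ 1 - t) ht0 (by ring)
    simpa using this
  have hdot_ak : ∀ k : Fin (N + 1), ∑ d, β d * (ak k) d = ((k : ℕ) : ℝ) * u := by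
    intro k
    have : ∑ d, β d * (ak k) d = (((k : ℕ) : ℝ) / ((N : ℝ) + 1)) * s0 := by
      rw [hs0def, Finset.mul_sum]
      refine Finset.sum_congr rfl fun d _ => ?_
      simp [hak, Pi.smul_apply]; ring
    rw [this, hu_def]; ring
  -- the N+1 patterns
  set P : Fin (N + 1) → Fin N → ℤ :=
    fun k n => if 0 ≤ (((k : ℕ) : ℝ) - e n) * u then 1 else -1 with hP
  have hPmem : ∀ k, P k ∈ patterns (hbeta β) A xs := by
    intro k
    refine ⟨ak k, hakA k, fun n => ?_⟩
    have hsum : ∑ d, β d * (xs n + ak k) d = (((k : ℕ) : ℝ) - e n) * u := by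
      rw [dot_add, hxs n, hdot_ak k]; ring
    simp only [hP, hbeta, hsum]
  have hPinj : Function.Injective P := by
    have hlt : ∀ k k' : Fin (N + 1), (k : ℕ) < (k' : ℕ) → P k ≠ P k' := by
      intro k k' hkk' hPeq
      have hkN : (k : ℕ) < N := lt_of_lt_of_le hkk' (Nat.lt_succ_iff.mp k'.isLt)
      set n : Fin N := ⟨(k : ℕ), hkN⟩ with hn
      have hfun := congrFun hPeq n
      rcases hu.lt_or_gt with hneg | hpos
      · -- u < 0, e n = n = k : P k n = 1, P k' n = -1
        have hen : e n = ((k : ℕ) : ℝ) := by simp [he, not_lt.mpr (le_of_lt hneg), hn]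
        have h1 : P k n = 1 := by
          simp only [hP, hen]
          rw [if_pos (by simp)]
        have h2 : P k' n = -1 := by
          simp only [hP, hen]
          rw [if_neg]
          have hd : (0 : ℝ) < ((k' : ℕ) : ℝ) - ((k : ℕ) : ℝ) := by
            have : ((k : ℕ) : ℝ) < ((k' : ℕ) : ℝ) := by exact_mod_cast hkk'
            linarith
          nlinarith
        rw [h1, h2] at hfun; exact absurd hfun (by decide)
      · -- 0 < u, e n = k + 1 : P k n = -1, P k' n = 1
        have hen : e n = ((k : ℕ) : ℝ) + 1 := by simp [he, hpos, hn]
        have h1 : P k n = -1 := by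
          simp only [hP, hen]
          rw [if_neg]
          nlinarith
        have h2 : P k' n = 1 := by
          simp only [hP, hen]
          rw [if_pos]
          have hd : (0 : ℝ) ≤ ((k' : ℕ) : ℝ) - (((k : ℕ) : ℝ) + 1) := by
            have : ((k : ℕ) : ℝ) + 1 ≤ ((k' : ℕ) : ℝ) := by exact_mod_cast hkk'
            linarith
          positivity
        rw [h1, h2] at hfun; exact absurd hfun (by decide)
    intro k k' hPeq
    rcases lt_trichotomy (k : ℕ) (k' : ℕ) with h | h | h
    · exact absurd hPeq (hlt k k' h)
    · exact Fin.ext h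
    · exact absurd hPeq.symm (hlt k' k h)
  have hrange : Set.range P ⊆ patterns (hbeta β) A xs := by
    rintro p ⟨k, rfl⟩; exact hPmem k
  have hlow : ((N : ℕ∞) + 1) ≤ (patterns (hbeta β) A xs).encard := by
    have h1 : (Set.range P).encard = ((N : ℕ∞) + 1) := by
      rw [← Set.image_univ, (hPinj.injOn).encard_image, Set.encard_univ]
      simp [ENat.card_eq_coe_fintype_card]
    rw [← h1]
    exact Set.encard_le_encard hrange
  have hup := patterns_encard_le β A (N := N)
  have hxs_encard : (patterns (hbeta β) A xs).encard = ((N : ℕ∞) + 1) :=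
    le_antisymm (hup xs) hlow
  refine ⟨⟨xs, hxs_encard⟩, hup, ?_⟩
  apply le_antisymm
  · exact iSup_le hup
  · rw [← hxs_encard]
    exact le_iSup (fun ys => (patterns (hbeta β) A ys).encard) xs
end
end
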